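/- arXiv:1303.2489 — 2 statements merged into one kernel-verified Lean document; each statement's English description precedes it below -/
import Mathlib

section
/- Non-colliding consequent predicate yields a counterexample: let Σ be a spatial conjunction with s ⊨ WellFormed(Σ), and let S' be a spatial predicate with s ⊨ ¬Empty(S') such that for every conjunct S of Σ, s ⊭ Collide(S,S'). Then there exists a heap h with s,h ⊨ Σ and s(Addr(S')) ∉ dom(h); consequently s,h ⊭ Σ' for any spatial conjunction Σ' containing S'. -/
def Heap := ℤ → Option ℤ
def Stack := String → ℤ

def hemp : Heap := fun _ => none
def hsingle (a v : ℤ) : Heap := fun l => if l = a then some v else none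
def hdisj (h₁ h₂ : Heap) : Prop := ∀ l, h₁ l = none ∨ h₂ l = none
def hunion (h₁ h₂ : Heap) : Heap := fun l =>
  match h₁ l with
  | some v => some v
  | none => h₂ l
def hdom (h : Heap) : Set ℤ := {l | h l ≠ none}

/-- Acyclic list segment: `Lseg a b h` means `h` is a list segment from `a` to `b`. -/
inductive Lseg : ℤ → ℤ → Heap → Prop
  | nil (a : ℤ) : Lseg a a hemp
  | cons {a b c : ℤ} {h : Heap} (hne : a ≠ b) (hfresh : h a = none)
      (ht : Lseg c b h) : Lseg a b (hunion (hsingle a c) h)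

/-- Spatial predicates. -/
inductive SP where
  | emp : SP
  | next (x y : String) : SP
  | lseg (x y : String) : SP

/-- Satisfaction of a single spatial predicate. -/
def sat (s : Stack) (h : Heap) : SP → Prop
  | .emp => h = hemp
  | .next x y => h = hsingle (s x) (s y)
  | .lseg x y => Lseg (s x) (s y) h

/-- Satisfaction of a spatial conjunction (list of predicates). -/
def satList (s : Stack) (h : Heap) : List SP → Prop
  | [] => h = hemp
  | S :: Sg => ∃ h₁ h₂, hdisj h₁ h₂ ∧ h = hunion h₁ h₂ ∧ sat s h₁ S ∧ satList s h₂ Sg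

/-- Emptiness condition of a spatial predicate. -/
def emptyCond (s : Stack) : SP → Prop
  | .emp => True
  | .next _ _ => False
  | .lseg x y => s x = s y

/-- Address of a spatial predicate (dummy value 0 for `emp`, which is always empty). -/
def addrVal (s : Stack) : SP → ℤ
  | .emp => 0
  | .next x _ => s x
  | .lseg x _ => s x

def collide (s : Stack) (S S' : SP) : Prop :=
  ¬ emptyCond s S ∧ ¬ emptyCond s S' ∧ addrVal s S = addrVal s S'

def wellFormed (s : Stack) (Sg : List SP) : Prop :=
  List.Pairwise (fun S S' => ¬ collide s S S') Sg


/-! Give every conjunct of `Σ` its one-cell (or empty) canonical model; the domain of the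
resulting heap is the union of the footprints `{Addr(S) | ¬Empty(S)}`, so well-formedness makes
the pieces disjoint and non-collision keeps `Addr(S')` out of it. Every model of a conjunction
containing the non-empty `S'` allocates `Addr(S')`, hence this heap refutes any such `Σ'`. -/

lemma hunion_hemp (h : Heap) : hunion h hemp = h := by
  funext l
  simp only [hunion, hemp]
  cases h l <;> rfl

lemma hdom_hemp : hdom hemp = ∅ := by
  ext; simp [hdom, hemp]

lemma hdom_hsingle (a v : ℤ) : hdom (hsingle a v) = {a} := by
  ext; simp [hdom, hsingle]

lemma hdom_hunion (h₁ h₂ : Heap) : hdom (hunion h₁ h₂) = hdom h₁ ∪ hdom h₂ := by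
  ext l
  simp only [hdom, hunion, Set.mem_ofPred_eq, Set.mem_union]
  cases h₁ l <;> simp

lemma hdisj_iff_disjoint_hdom (h₁ h₂ : Heap) :
    hdisj h₁ h₂ ↔ Disjoint (hdom h₁) (hdom h₂) := by
  simp only [hdisj, Set.disjoint_left, hdom, Set.mem_ofPred_eq, not_not]
  exact forall_congr' fun l => by tauto

lemma Lseg.single {a b : ℤ} (hab : a ≠ b) : Lseg a b (hsingle a b) :=
  hunion_hemp (hsingle a b) ▸ Lseg.cons hab rfl (Lseg.nil b)

lemma Lseg.mem_hdom {a b : ℤ} {h : Heap} (hl : Lseg a b h) (hab : a ≠ b) : a ∈ hdom h := by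
  cases hl with
  | nil => exact absurd rfl hab
  | cons _ _ _ => simp [hdom_hunion, hdom_hsingle]

def footprint (s : Stack) (S : SP) : Set ℤ := {l | ¬ emptyCond s S ∧ addrVal s S = l}

lemma addrVal_mem_footprint {s : Stack} {S : SP} (hS : ¬ emptyCond s S) :
    addrVal s S ∈ footprint s S :=
  ⟨hS, rfl⟩

lemma not_collide_iff_disjoint_footprint (s : Stack) (S S' : SP) :
    ¬ collide s S S' ↔ Disjoint (footprint s S) (footprint s S') := by
  simp only [collide, footprint, Set.disjoint_left, Set.mem_ofPred_eq]
  constructor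
  · rintro h l ⟨hS, rfl⟩ ⟨hS', hl⟩
    exact h ⟨hS, hS', hl.symm⟩
  · rintro h ⟨hS, hS', hl⟩
    exact h ⟨hS, rfl⟩ ⟨hS', hl.symm⟩

lemma collide_comm (s : Stack) (S S' : SP) : collide s S S' ↔ collide s S' S := by
  simp only [collide, eq_comm]
  tauto

lemma addrVal_mem_hdom_of_sat {s : Stack} {h : Heap} {S : SP} (hsat : sat s h S)
    (hS : ¬ emptyCond s S) : addrVal s S ∈ hdom h := by
  cases S with
  | emp => exact absurd trivial hS
  | next x y =>
    rw [sat] at hsat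
    simp [hsat, addrVal, hdom_hsingle]
  | lseg x y => exact Lseg.mem_hdom hsat hS

lemma addrVal_mem_hdom_of_satList {s : Stack} {h : Heap} {S : SP} {Sg : List SP}
    (hsat : satList s h Sg) (hmem : S ∈ Sg) (hS : ¬ emptyCond s S) : addrVal s S ∈ hdom h := by
  induction Sg generalizing h with
  | nil => cases hmem
  | cons T Sg ih =>
    obtain ⟨h₁, h₂, -, rfl, hsat₁, hsat₂⟩ := hsat
    rw [hdom_hunion]
    rcases List.mem_cons.1 hmem with rfl | hmem
    · exact Or.inl (addrVal_mem_hdom_of_sat hsat₁ hS)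
    · exact Or.inr (ih hsat₂ hmem)

def canonicalModel (s : Stack) : SP → Heap
  | .emp => hemp
  | .next x y => hsingle (s x) (s y)
  | .lseg x y => if s x = s y then hemp else hsingle (s x) (s y)

lemma sat_canonicalModel (s : Stack) (S : SP) : sat s (canonicalModel s S) S := by
  cases S with
  | emp => rfl
  | next x y => rfl
  | lseg x y =>
    by_cases hxy : s x = s y
    · simpa [canonicalModel, sat, hxy] using Lseg.nil (s y)
    · simpa [canonicalModel, sat, hxy] using Lseg.single hxy

lemma hdom_canonicalModel (s : Stack) (S : SP) : hdom (canonicalModel s S) = footprint s S := by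
  ext l
  cases S with
  | emp => simp [canonicalModel, footprint, emptyCond, hdom_hemp]
  | next x y => simp [canonicalModel, footprint, emptyCond, addrVal, hdom_hsingle, eq_comm]
  | lseg x y =>
    by_cases hxy : s x = s y <;>
      simp [canonicalModel, footprint, emptyCond, addrVal, hxy, hdom_hemp, hdom_hsingle, eq_comm]

def listCanonicalModel (s : Stack) : List SP → Heap
  | [] => hemp
  | S :: Sg => hunion (canonicalModel s S) (listCanonicalModel s Sg)

lemma hdom_listCanonicalModel (s : Stack) (Sg : List SP) :
    hdom (listCanonicalModel s Sg) = ⋃ S ∈ Sg, footprint s S := by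
  induction Sg with
  | nil => simp [listCanonicalModel, hdom_hemp]
  | cons S Sg ih =>
    simp [listCanonicalModel, hdom_hunion, hdom_canonicalModel, ih]

lemma disjoint_hdom_listCanonicalModel {s : Stack} {Sg : List SP} {S' : SP}
    (hnc : ∀ S ∈ Sg, ¬ collide s S S') :
    Disjoint (hdom (listCanonicalModel s Sg)) (footprint s S') := by
  rw [hdom_listCanonicalModel, Set.disjoint_iUnion₂_left]
  exact fun S hS => (not_collide_iff_disjoint_footprint s S S').1 (hnc S hS)

lemma satList_listCanonicalModel {s : Stack} {Sg : List SP} (hwf : wellFormed s Sg) :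
    satList s (listCanonicalModel s Sg) Sg := by
  induction Sg with
  | nil => rfl
  | cons S Sg ih =>
    rw [wellFormed, List.pairwise_cons] at hwf
    refine ⟨canonicalModel s S, listCanonicalModel s Sg, ?_, rfl,
      sat_canonicalModel s S, ih hwf.2⟩
    rw [hdisj_iff_disjoint_hdom, hdom_canonicalModel]
    exact (disjoint_hdom_listCanonicalModel fun T hT =>
      (collide_comm s T S).not.2 (hwf.1 T hT)).symm

theorem stmt18 (s : Stack) (Sg : List SP) (S' : SP)
    (hwf : wellFormed s Sg) (hne : ¬ emptyCond s S')
    (hnc : ∀ S ∈ Sg, ¬ collide s S S') :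
    ∃ h : Heap, satList s h Sg ∧ addrVal s S' ∉ hdom h ∧
      ∀ Sg' : List SP, S' ∈ Sg' → ¬ satList s h Sg' := by
  have hout : addrVal s S' ∉ hdom (listCanonicalModel s Sg) := fun hmem =>
    (disjoint_hdom_listCanonicalModel hnc).notMem_of_mem_left hmem (addrVal_mem_footprint hne)
  exact ⟨listCanonicalModel s Sg, satList_listCanonicalModel hwf, hout,
    fun Sg' hmem hsat => hout (addrVal_mem_hdom_of_satList hsat hmem hne)⟩
end

section
/- Segment length and distinct addresses: if s,h ⊨ lseg(x,z), then there exists a finite sequence of values v₀ = s(x), v₁, ..., vₙ = s(z) such that the vᵢ for i < n are pairwise distinct, dom(h) = {v₀, ..., v_{n-1}}, and h(vᵢ) = v_{i+1} for all i < n. -/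
lemma hunion_hsingle_self (a c : ℤ) (h : Heap) : hunion (hsingle a c) h a = some c := by
  simp [hunion, hsingle]

lemma hunion_hsingle_of_ne {a l : ℤ} (c : ℤ) (h : Heap) (hl : l ≠ a) :
    hunion (hsingle a c) h l = h l := by
  simp [hunion, hsingle, hl]

lemma hdom_hunion_hsingle (a c : ℤ) (h : Heap) :
    hdom (hunion (hsingle a c) h) = insert a (hdom h) := by
  ext l
  by_cases hl : l = a
  · subst hl
    simp [hdom, hunion_hsingle_self]
  · simp [hdom, hunion_hsingle_of_ne c h hl, hl]

def IsSegmentTrace (h : Heap) (a b : ℤ) (n : ℕ) (v : ℕ → ℤ) : Prop :=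
  v 0 = a ∧ v n = b ∧
    (∀ i j, i < n → j < n → v i = v j → i = j) ∧
    hdom h = {w | ∃ i < n, w = v i} ∧
    (∀ i < n, h (v i) = some (v (i + 1)))

lemma isSegmentTrace_hemp (a : ℤ) : IsSegmentTrace hemp a a 0 (fun _ => a) :=
  ⟨rfl, rfl, by omega, by ext; simp [hdom, hemp], by omega⟩

lemma IsSegmentTrace.cons {h : Heap} {a b c : ℤ} {n : ℕ} {v : ℕ → ℤ}
    (ht : IsSegmentTrace h c b n v) (hfresh : h a = none) :
    IsSegmentTrace (hunion (hsingle a c) h) a b (n + 1) (fun | 0 => a | i + 1 => v i) := by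
  obtain ⟨hv₀, hvn, hinj, hdom_eq, hstep⟩ := ht
  -- every `v i` with `i < n` is allocated in `h`, whereas `a` is not
  have hv_ne : ∀ i < n, v i ≠ a := fun i hi => by
    rintro rfl
    simp [hstep i hi] at hfresh
  refine ⟨rfl, hvn, ?_, ?_, ?_⟩
  · rintro (_ | i) (_ | j) hi hj hij
    · rfl
    · exact absurd hij.symm (hv_ne j (by omega))
    · exact absurd hij (hv_ne i (by omega))
    · simpa using hinj i j (by omega) (by omega) hij
  · ext w
    simp only [hdom_hunion_hsingle, hdom_eq, Set.mem_insert_iff, Set.mem_ofPred_eq,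
      Nat.exists_lt_succ_left]
  · refine Nat.forall_lt_succ_left.2 ⟨?_, fun i hi => ?_⟩
    · simpa [hv₀] using hunion_hsingle_self a c h
    · rw [hunion_hsingle_of_ne c h (hv_ne i hi)]
      exact hstep i hi

lemma Lseg.exists_isSegmentTrace {a b : ℤ} {h : Heap} (hl : Lseg a b h) :
    ∃ n v, IsSegmentTrace h a b n v := by
  induction hl with
  | nil a => exact ⟨0, _, isSegmentTrace_hemp a⟩
  | cons _ hfresh _ ih =>
    obtain ⟨n, v, ht⟩ := ih
    exact ⟨n + 1, _, ht.cons hfresh⟩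

theorem stmt19 (s : Stack) (h : Heap) (x z : String)
    (hl : sat s h (.lseg x z)) :
    ∃ (n : ℕ) (v : ℕ → ℤ),
      v 0 = s x ∧ v n = s z ∧
      (∀ i j, i < n → j < n → v i = v j → i = j) ∧
      hdom h = {w | ∃ i < n, w = v i} ∧
      (∀ i < n, h (v i) = some (v (i + 1))) :=
  Lseg.exists_isSegmentTrace hl
end
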